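/- arXiv:1803.06144 — 4 statements merged into one kernel-verified Lean document; each statement's English description precedes it below -/
import Mathlib

section
/- Let n ≥ 0 and let φ be the (n+1)×(n+1) integer matrix defined by: φ[i][j] = -1 if i = j and j < n; φ[i][j] = -1 if i = j+1 and j < n; φ[i][n] = (-1)^{n+1-i} * C(n+1, n+1-i) for i < n; φ[n][n] = -(n+1) - 1; and all other entries 0. Then det(φ) = ± 2^{n+1}, i.e., |det(φ)| = 2^{n+1}. -/
open Finset

lemma aux_choose_sum (n : ℕ) :
    (∑ k ∈ Finset.range n, Nat.choose (n + 1) (n + 1 - k)) + (n + 2) = 2 ^ (n + 1) := by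
  have h1 : ∑ i ∈ Finset.range (n + 2), Nat.choose (n + 1) i = 2 ^ (n + 1) :=
    Nat.sum_range_choose (n + 1)
  have h2 : (∑ k ∈ Finset.range n, Nat.choose (n + 1) (n + 1 - k)) =
      ∑ k ∈ Finset.range n, Nat.choose (n + 1) (k + 1 + 1) := by
    rw [← Finset.sum_range_reflect (fun k => Nat.choose (n + 1) (k + 1 + 1)) n]
    apply Finset.sum_congr rfl
    intro j hj
    simp only [Finset.mem_range] at hj
    congr 1
    omega
  rw [h2]
  rw [Finset.sum_range_succ' _ (n + 1), Finset.sum_range_succ' _ n] at h1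
  simp only [zero_add, Nat.choose_zero_right, Nat.choose_one_right] at h1
  omega

theorem stmt5 (n : ℕ)
    (φ : Matrix (Fin (n + 1)) (Fin (n + 1)) ℤ)
    (hφ : ∀ i j, φ i j =
      if (j : ℕ) = n then
        (if (i : ℕ) = n then -((n : ℤ) + 2)
         else (-1) ^ (n + 1 - (i : ℕ)) * (Nat.choose (n + 1) (n + 1 - (i : ℕ)) : ℤ))
      else if (i : ℕ) = (j : ℕ) ∨ (i : ℕ) = (j : ℕ) + 1 then -1 else 0) :
    φ.det.natAbs = 2 ^ (n + 1) := by
  classical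
  set T : ℕ → ℤ := fun j => ∑ k ∈ Finset.range (j + 1),
      (Nat.choose (n + 1) (n + 1 - k) : ℤ) with hT
  set A : ℕ → ℤ := fun j => (-1) ^ (n + j) * T j with hA
  set c : Fin (n + 1) → ℤ := fun k => if (k : ℕ) < n then -A k else 1 with hc
  set w : Fin (n + 1) → ℤ := fun i => if (i : ℕ) = n then -(2 ^ (n + 1) : ℤ) else 0 with hw
  have hlast : ((Fin.last n : Fin (n + 1)) : ℕ) = n := rfl
  have hcol : ∀ i, w i = ∑ k, c k • φ i k := by
    intro i
    have hsplit : ∑ k, c k • φ i k =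
        (∑ j : Fin n, c j.castSucc • φ i j.castSucc) + c (Fin.last n) • φ i (Fin.last n) :=
      Fin.sum_univ_castSucc _
    have hφj : ∀ j : Fin n, φ i j.castSucc =
        if (i : ℕ) = (j : ℕ) ∨ (i : ℕ) = (j : ℕ) + 1 then -1 else 0 := by
      intro j
      rw [hφ]
      have h : ((j.castSucc : Fin (n + 1)) : ℕ) = (j : ℕ) := rfl
      rw [h, if_neg (by omega)]
    have hcj : ∀ j : Fin n, c j.castSucc = -A (j : ℕ) := by
      intro j
      simp only [hc, Fin.coe_castSucc]
      rw [if_pos j.isLt]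
    have hsum : (∑ j : Fin n, c j.castSucc • φ i j.castSucc) =
        ∑ j ∈ Finset.range n, ((if (i : ℕ) = j then A j else 0)
          + (if (i : ℕ) = j + 1 then A j else 0)) := by
      rw [Finset.sum_range fun j => _]
      apply Finset.sum_congr rfl
      intro j _
      rw [hφj j, hcj j]
      by_cases h1 : (i : ℕ) = (j : ℕ)
      · rw [if_pos (Or.inl h1), if_pos h1, if_neg (by omega)]
        simp only [smul_eq_mul]; ring
      · by_cases h2 : (i : ℕ) = (j : ℕ) + 1
        · rw [if_pos (Or.inr h2), if_neg h1, if_pos h2]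
          simp only [smul_eq_mul]; ring
        · rw [if_neg (by tauto), if_neg h1, if_neg h2]
          simp only [smul_eq_mul]; ring
    rw [hsplit, hsum, Finset.sum_add_distrib,
      Finset.sum_ite_eq (Finset.range n) (i : ℕ) (fun j => A j)]
    have hclast : c (Fin.last n) = 1 := by
      simp only [hc, hlast]
      rw [if_neg (by omega)]
    have hφlast : φ i (Fin.last n) =
        if (i : ℕ) = n then -((n : ℤ) + 2)
        else (-1) ^ (n + 1 - (i : ℕ)) * (Nat.choose (n + 1) (n + 1 - (i : ℕ)) : ℤ) := by
      rw [hφ, if_pos hlast]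
    rw [hclast, one_smul, hφlast]
    rcases Nat.eq_zero_or_pos (i : ℕ) with hi0 | hipos
    · have hs2 : (∑ j ∈ Finset.range n, if (i : ℕ) = j + 1 then A j else 0) = 0 := by
        apply Finset.sum_eq_zero
        intro j _
        rw [if_neg (by omega)]
      rw [hs2]
      by_cases hn0 : n = 0
      · subst hn0
        have hT0 : T 0 = 1 := by
          simp only [hT]
          rw [zero_add, Finset.sum_range_one]
          simp
        simp only [hw, hi0, hA, hT0]
        norm_num
      · rw [if_pos (Finset.mem_range.mpr (by omega : (i : ℕ) < n)), if_neg (by omega)]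
        have hwi : w i = 0 := by simp only [hw]; rw [if_neg (by omega)]
        have hT0 : T 0 = 1 := by
          simp only [hT]
          rw [zero_add, Finset.sum_range_one]
          simp
        rw [hwi, hi0]
        simp only [hA, hT0, Nat.sub_zero, Nat.add_zero, Nat.choose_self,
          Nat.cast_one, mul_one, pow_succ]
        ring
    · obtain ⟨m, hm⟩ : ∃ m, (i : ℕ) = m + 1 := ⟨(i : ℕ) - 1, by omega⟩
      have hs2 : (∑ j ∈ Finset.range n, if (i : ℕ) = j + 1 then A j else 0) =
          ∑ j ∈ Finset.range n, if j = m then A j else 0 := by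
        apply Finset.sum_congr rfl
        intro j _
        congr 1
        simp only [eq_iff_iff]
        omega
      rw [hs2, Finset.sum_ite_eq' (Finset.range n) m (fun j => A j)]
      by_cases hin : (i : ℕ) = n
      · rw [if_pos hin, if_neg (by simp only [Finset.mem_range]; omega),
          if_pos (Finset.mem_range.mpr (by omega : m < n))]
        have hexp : (-1 : ℤ) ^ (n + m) = -1 := by
          have h : n + m = 2 * m + 1 := by omega
          rw [h, pow_succ, pow_mul]
          norm_num
        have hTm : T m + ((n : ℤ) + 2) = 2 ^ (n + 1) := by
          have hh := aux_choose_sum n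
          have hm' : m + 1 = n := by omega
          simp only [hT, hm']
          exact_mod_cast hh
        simp only [hw, if_pos hin, hA]
        rw [hexp]
        linarith
      · have him : m < n := by have := i.isLt; omega
        rw [if_neg hin, if_pos (Finset.mem_range.mpr (by omega : (i : ℕ) < n)),
          if_pos (Finset.mem_range.mpr him)]
        have hwi : w i = 0 := by simp only [hw]; rw [if_neg hin]
        rw [hwi]
        simp only [hA]
        have hTs : T (m + 1) = T m + (Nat.choose (n + 1) (n + 1 - (m + 1)) : ℤ) :=
          Finset.sum_range_succ _ (m + 1)
        have hpar : ∀ a b : ℕ, a % 2 = b % 2 → (-1 : ℤ) ^ a = (-1) ^ b := by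
          intro a b hab
          rcases Nat.even_or_odd a with h | h
          · rw [h.neg_one_pow, (Nat.even_iff.mpr (by rw [Nat.even_iff] at h; omega)).neg_one_pow]
          · rw [h.neg_one_pow, (Nat.odd_iff.mpr (by rw [Nat.odd_iff] at h; omega)).neg_one_pow]
        have hsign : (-1 : ℤ) ^ (n + 1 - (m + 1)) = (-1) ^ (n + m) :=
          hpar _ _ (by omega)
        have h4 : (-1 : ℤ) ^ (n + (m + 1)) = -(-1) ^ (n + m) := by
          have h : n + (m + 1) = (n + m) + 1 := by omega
          rw [h, pow_succ]
          ring
        rw [hm, hsign, h4, hTs]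
        ring
  set L := φ.updateCol (Fin.last n) w with hL
  have hdet1 : L.det = φ.det := by
    have hwfun : w = fun i => ∑ k, c k • φ i k := funext hcol
    rw [hL, hwfun, Matrix.det_updateCol_sum]
    have hclast : c (Fin.last n) = 1 := by
      simp only [hc, hlast]
      rw [if_neg (by omega)]
    rw [hclast, one_smul]
  have htri : L.BlockTriangular OrderDual.toDual := by
    intro i j hij
    have hij' : (i : ℕ) < (j : ℕ) := hij
    by_cases hj : j = Fin.last n
    · subst hj
      rw [hL, Matrix.updateCol_self]
      simp only [hw]
      rw [if_neg (by rw [hlast] at hij'; omega)]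
    · rw [hL, Matrix.updateCol_ne hj, hφ]
      have hjn : (j : ℕ) ≠ n := fun h => hj (Fin.ext h)
      rw [if_neg hjn, if_neg (by omega)]
  have hdet2 : L.det = ∏ i, L i i := Matrix.det_of_lowerTriangular L htri
  have hprod : (∏ i, L i i) = (-1) ^ n * -(2 ^ (n + 1) : ℤ) := by
    rw [Fin.prod_univ_castSucc]
    have h1 : ∀ i : Fin n, L i.castSucc i.castSucc = -1 := by
      intro i
      have hne : (i.castSucc : Fin (n + 1)) ≠ Fin.last n := by
        intro h
        have h' := congrArg (fun x : Fin (n + 1) => (x : ℕ)) h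
        simp only [Fin.coe_castSucc, hlast] at h'
        have := i.isLt; omega
      rw [hL, Matrix.updateCol_ne hne, hφ]
      have h : ((i.castSucc : Fin (n + 1)) : ℕ) = (i : ℕ) := rfl
      rw [h, if_neg (by have := i.isLt; omega), if_pos (Or.inl rfl)]
    have h2 : L (Fin.last n) (Fin.last n) = -(2 ^ (n + 1) : ℤ) := by
      rw [hL, Matrix.updateCol_self]
      simp [hw]
    rw [h2]
    congr 1
    rw [Finset.prod_congr rfl (fun i _ => h1 i)]
    simp
  have hfin : φ.det = (-1) ^ n * -(2 ^ (n + 1) : ℤ) := by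
    rw [← hdet1, hdet2, hprod]
  rw [hfin, Int.natAbs_mul, Int.natAbs_neg, Int.natAbs_pow]
  rw [Int.natAbs_pow]
  simp [Int.natAbs_pow]
end

section
/- Let n ≥ 0 and let φ be the (n+1)×(n+1) integer matrix from the exterior-algebra computation: φ[i][j] = -1 if (i = j and j < n) or (i = j+1 and j < n); φ[i][n] = (-1)^{n+1-i} * C(n+1, n+1-i) for i < n; φ[n][n] = -(n+2); all other entries 0. Then the cokernel of the ℤ-linear map ℤ^{n+1} → ℤ^{n+1} given by φ is a cyclic group of order 2^{n+1}, i.e., (ℤ^{n+1}) / (range of φ) ≅ ℤ/2^{n+1}ℤ. -/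
open Finset

private lemma negpow_cancel (k : ℕ) : ((-1:ℤ))^k * (-1)^k = 1 := by
  rw [← pow_add, ← two_mul, pow_mul]; norm_num

private lemma npow_sub {a b : ℕ} (h : b ≤ a) : ((-1:ℤ))^(a-b) = (-1)^(a+b) := by
  have h2 : a + b = (a - b) + 2*b := by omega
  rw [h2, pow_add, pow_mul]; norm_num

private lemma choose_sum_aux (n : ℕ) : ∀ m, m ≤ n + 2 →
    ((∑ k ∈ range m, (n+1).choose (n+1-k)) + ∑ k ∈ range (n+2-m), (n+1).choose k)
      = 2^(n+1) := by
  intro m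
  induction m with
  | zero => intro _; simpa using Nat.sum_range_choose (n+1)
  | succ m ih =>
      intro h
      have h1 := ih (by omega)
      have h2 : n + 2 - m = (n + 1 - m) + 1 := by omega
      have h3 : n + 2 - (m+1) = n + 1 - m := by omega
      rw [h2, sum_range_succ] at h1
      rw [h3, sum_range_succ]
      omega

private lemma row_split (n m : ℕ) (hm : m ≤ n) (c : ℤ) (A : ℕ → ℤ) :
    ∑ j ∈ range (n+1), (if j = n then c else if m = j ∨ m = j+1 then (-1:ℤ) else 0) * A j
    = (if m < n then -A m else 0) + (if 1 ≤ m then -A (m-1) else 0) + c * A n := by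
  rw [sum_range_succ, if_pos rfl]
  congr 1
  have split : ∀ j ∈ range n, (if j = n then c else if m = j ∨ m = j+1 then (-1:ℤ) else 0) * A j
      = ((if m = j then -A j else 0) + (if m = j + 1 then -A j else 0)) := by
    intro j hj
    rw [mem_range] at hj
    rw [if_neg (show ¬ j = n by omega)]
    by_cases h1 : m = j
    · have h2 : ¬ m = j + 1 := by omega
      simp [h1, h2]
    · by_cases h2 : m = j + 1
      · simp [h1, h2]
      · simp [h1, h2]
  rw [sum_congr rfl split, sum_add_distrib]
  have e1 : (∑ j ∈ range n, if m = j then -A j else 0) = if m < n then -A m else 0 := by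
    rw [sum_ite_eq]; simp [mem_range]
  have e2 : (∑ j ∈ range n, if m = j + 1 then -A j else 0) = if 1 ≤ m then -A (m-1) else 0 := by
    rcases m with _ | m'
    · simp
    · have h : ∀ j ∈ range n, (if m'+1 = j+1 then -A j else 0) = (if m' = j then -A j else 0) := by
        intro j _
        by_cases h : m' = j
        · rw [if_pos h, if_pos (by omega)]
        · rw [if_neg h, if_neg (by omega)]
      rw [sum_congr rfl h, sum_ite_eq]
      rw [if_pos (mem_range.2 (by omega)), if_pos (by omega)]
      norm_num
  rw [e1, e2]

private def fmap (n : ℕ) : (Fin (n + 1) → ℤ) →ₗ[ℤ] ZMod (2 ^ (n + 1)) where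
  toFun x := ((∑ i : Fin (n+1), (-1:ℤ)^(i:ℕ) * x i : ℤ) : ZMod (2^(n+1)))
  map_add' a b := by
    have h : (∑ i : Fin (n+1), (-1:ℤ)^(i:ℕ) * (a + b) i)
        = (∑ i : Fin (n+1), (-1:ℤ)^(i:ℕ) * a i) + (∑ i : Fin (n+1), (-1:ℤ)^(i:ℕ) * b i) := by
      rw [← Finset.sum_add_distrib]
      exact Finset.sum_congr rfl (fun i _ => by simp [Pi.add_apply]; ring)
    rw [h, Int.cast_add]
  map_smul' c a := by
    have h : (∑ i : Fin (n+1), (-1:ℤ)^(i:ℕ) * (c • a) i)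
        = c * (∑ i : Fin (n+1), (-1:ℤ)^(i:ℕ) * a i) := by
      rw [Finset.mul_sum]
      exact Finset.sum_congr rfl (fun i _ => by simp [Pi.smul_apply]; ring)
    rw [h, Int.cast_mul, RingHom.id_apply, zsmul_eq_mul]

private lemma fmap_apply (n : ℕ) (x : Fin (n+1) → ℤ) :
    fmap n x = ((∑ i : Fin (n+1), (-1:ℤ)^(i:ℕ) * x i : ℤ) : ZMod (2^(n+1))) := rfl

private lemma dir1 (n : ℕ)
    (φ : Matrix (Fin (n + 1)) (Fin (n + 1)) ℤ)
    (hφ : ∀ i j, φ i j =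
      if (j : ℕ) = n then
        (if (i : ℕ) = n then -((n : ℤ) + 2)
         else (-1) ^ (n + 1 - (i : ℕ)) * (Nat.choose (n + 1) (n + 1 - (i : ℕ)) : ℤ))
      else if (i : ℕ) = (j : ℕ) ∨ (i : ℕ) = (j : ℕ) + 1 then -1 else 0) :
    LinearMap.range (Matrix.toLin' φ) ≤ LinearMap.ker (fmap n) := by
  classical
  have colsum : ∀ j : Fin (n+1), (∑ i : Fin (n+1), (-1:ℤ)^(i:ℕ) * φ i j)
      = if (j:ℕ) = n then (-1)^(n+1) * 2^(n+1) else 0 := by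
    intro j
    have hconv : (∑ i : Fin (n+1), (-1:ℤ)^(i:ℕ) * φ i j)
        = ∑ k ∈ range (n+1), (-1:ℤ)^k *
          (if (j:ℕ) = n then
            (if k = n then -((n:ℤ)+2) else (-1)^(n+1-k) * ((n+1).choose (n+1-k) : ℤ))
           else if k = (j:ℕ) ∨ k = (j:ℕ)+1 then -1 else 0) := by
      rw [← Fin.sum_univ_eq_sum_range]
      exact sum_congr rfl (fun i _ => by rw [hφ])
    rw [hconv]
    by_cases hj : (j:ℕ) = n
    · rw [if_pos hj]
      simp only [if_pos hj]
      rw [sum_range_succ, if_pos rfl]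
      have hterm : ∀ k ∈ range n, (-1:ℤ)^k *
          (if k = n then -((n:ℤ)+2) else (-1)^(n+1-k) * ((n+1).choose (n+1-k) : ℤ))
          = (-1)^(n+1) * ((n+1).choose (n+1-k) : ℤ) := by
        intro k hk
        rw [mem_range] at hk
        rw [if_neg (show ¬ k = n by omega), npow_sub (show k ≤ n + 1 by omega), pow_add]
        linear_combination ((-1:ℤ)^(n+1) * ((n+1).choose (n+1-k) : ℤ)) * negpow_cancel k
      rw [sum_congr rfl hterm, ← mul_sum]
      have hcs := choose_sum_aux n n (by omega)
      have h2 : n + 2 - n = 2 := by omega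
      rw [h2, sum_range_succ, sum_range_one, Nat.choose_zero_right, Nat.choose_one_right] at hcs
      have hcast : (∑ k ∈ range n, ((n+1).choose (n+1-k) : ℤ)) = 2^(n+1) - (n+2) := by
        have := congrArg (Nat.cast : ℕ → ℤ) hcs
        push_cast at this
        linarith [this]
      rw [hcast, pow_succ]
      ring
    · rw [if_neg hj]
      have hterm : ∀ k ∈ range (n+1), (-1:ℤ)^k *
          (if (j:ℕ) = n then
            (if k = n then -((n:ℤ)+2) else (-1)^(n+1-k) * ((n+1).choose (n+1-k) : ℤ))
           else if k = (j:ℕ) ∨ k = (j:ℕ)+1 then -1 else 0)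
          = (if k = (j:ℕ) then (-1:ℤ)^k * (-1) else 0)
            + (if k = (j:ℕ)+1 then (-1:ℤ)^k * (-1) else 0) := by
        intro k _
        rw [if_neg hj]
        by_cases h1 : k = (j:ℕ)
        · have h2 : ¬ k = (j:ℕ)+1 := by omega
          simp [h1, h2]
        · by_cases h2 : k = (j:ℕ)+1
          · simp [h1, h2]
          · simp [h1, h2]
      rw [sum_congr rfl hterm, sum_add_distrib, sum_ite_eq', sum_ite_eq']
      have hjn : (j:ℕ) < n := by omega
      rw [if_pos (mem_range.2 (by omega)), if_pos (mem_range.2 (by omega)), pow_succ]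
      ring
  rintro _ ⟨y, rfl⟩
  rw [LinearMap.mem_ker, Matrix.toLin'_apply, fmap_apply]
  rw [show (∑ i : Fin (n+1), (-1:ℤ)^(i:ℕ) * (φ.mulVec y) i)
      = ∑ j : Fin (n+1), (∑ i : Fin (n+1), (-1:ℤ)^(i:ℕ) * φ i j) * y j from by
    simp only [Matrix.mulVec, dotProduct]
    rw [show (∑ i : Fin (n+1), (-1:ℤ)^(i:ℕ) * ∑ j : Fin (n+1), φ i j * y j)
        = ∑ i : Fin (n+1), ∑ j : Fin (n+1), (-1:ℤ)^(i:ℕ) * φ i j * y j from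
      sum_congr rfl (fun i _ => by rw [mul_sum]; exact sum_congr rfl (fun j _ => by ring))]
    rw [Finset.sum_comm]
    exact sum_congr rfl (fun j _ => by rw [sum_mul])]
  rw [show (∑ j : Fin (n+1), (∑ i : Fin (n+1), (-1:ℤ)^(i:ℕ) * φ i j) * y j)
      = (-1)^(n+1) * 2^(n+1) * y (Fin.last n) from by
    rw [Fin.sum_univ_castSucc]
    have hz : ∀ j : Fin n, (∑ i : Fin (n+1), (-1:ℤ)^(i:ℕ) * φ i j.castSucc) * y j.castSucc = 0 := by
      intro j
      rw [colsum, if_neg (show ¬ ((j.castSucc : ℕ) = n) by simpa using j.isLt.ne)]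
      ring
    rw [sum_congr rfl (fun j _ => hz j), colsum, if_pos (by simp)]
    simp]
  apply (ZMod.intCast_zmod_eq_zero_iff_dvd _ _).2
  refine ⟨(-1)^(n+1) * y (Fin.last n), ?_⟩
  push_cast
  ring

private lemma dir2 (n : ℕ)
    (φ : Matrix (Fin (n + 1)) (Fin (n + 1)) ℤ)
    (hφ : ∀ i j, φ i j =
      if (j : ℕ) = n then
        (if (i : ℕ) = n then -((n : ℤ) + 2)
         else (-1) ^ (n + 1 - (i : ℕ)) * (Nat.choose (n + 1) (n + 1 - (i : ℕ)) : ℤ))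
      else if (i : ℕ) = (j : ℕ) ∨ (i : ℕ) = (j : ℕ) + 1 then -1 else 0) :
    LinearMap.ker (fmap n) ≤ LinearMap.range (Matrix.toLin' φ) := by
  classical
  intro x hx
  rw [LinearMap.mem_ker, fmap_apply] at hx
  obtain ⟨d, hd⟩ := (ZMod.intCast_zmod_eq_zero_iff_dvd _ _).1 hx
  set x' : ℕ → ℤ := fun k => if h : k < n+1 then x ⟨k, h⟩ else 0 with hx'
  have hxi : ∀ i : Fin (n+1), x' (i:ℕ) = x i := by
    intro i
    show (if h : (i:ℕ) < n+1 then x ⟨(i:ℕ), h⟩ else 0) = x i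
    rw [dif_pos i.isLt, Fin.eta]
  have hS : (∑ k ∈ range (n+1), (-1:ℤ)^k * x' k) = 2^(n+1) * d := by
    rw [← Fin.sum_univ_eq_sum_range (fun k => (-1:ℤ)^k * x' k) (n+1)]
    rw [sum_congr rfl (fun i _ => by rw [hxi i]), hd]
    push_cast
    ring
  set A : ℕ → ℤ := fun m => (∑ k ∈ range (m+1), (-1:ℤ)^(m+k+1) * x' k)
      + (-1)^(n+1+m) * (∑ k ∈ range (m+1), ((n+1).choose (n+1-k) : ℤ)) * ((-1)^(n+1) * d)
      with hA
  have hA0 : A 0 = -x' 0 + d := by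
    rw [hA]
    simp only []
    rw [sum_range_one, sum_range_one]
    simp only [Nat.add_zero, Nat.sub_zero, Nat.choose_self, Nat.cast_one, Nat.zero_add]
    linear_combination d * negpow_cancel (n+1)
  have hAn : A n = (-1:ℤ)^(n+1) * d := by
    have e1 : (∑ k ∈ range (n+1), (-1:ℤ)^(n+k+1) * x' k)
        = (-1:ℤ)^(n+1) * (2^(n+1) * d) := by
      rw [← hS, mul_sum]
      refine sum_congr rfl (fun k _ => ?_)
      rw [show n + k + 1 = (n+1) + k from by omega, pow_add]
      ring
    have e2 : (∑ k ∈ range (n+1), ((n+1).choose (n+1-k) : ℤ)) = 2^(n+1) - 1 := by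
      have h := choose_sum_aux n (n+1) (by omega)
      rw [show n + 2 - (n+1) = 1 from by omega, sum_range_one, Nat.choose_zero_right] at h
      have := congrArg (Nat.cast : ℕ → ℤ) h
      push_cast at this
      linarith [this]
    rw [hA]
    simp only []
    rw [e1, e2]
    have p2 : (-1:ℤ)^(n+1+n) * (-1)^(n+1) = (-1)^n := by
      rw [← pow_add, show (n+1+n)+(n+1) = 2*(n+1)+n from by omega, pow_add, pow_mul]
      norm_num
    have p3 : (-1:ℤ)^(n+1) = -(-1:ℤ)^n := by rw [pow_succ]; ring
    linear_combination ((2:ℤ)^(n+1) - 1) * d * p2 + ((2:ℤ)^(n+1) * d - d) * p3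
      + ((2:ℤ)^(n+1) * d) * p3 * 0
  have hrec : ∀ m, A (m+1) + A m
      = -x' (m+1) - (-1:ℤ)^m * ((n+1).choose (n-m) : ℤ) * d := by
    intro m
    have e1 : (∑ k ∈ range (m+1+1), (-1:ℤ)^(m+1+k+1) * x' k)
        = -(∑ k ∈ range (m+1), (-1:ℤ)^(m+k+1) * x' k) - x' (m+1) := by
      rw [sum_range_succ]
      rw [sum_congr rfl (fun k _ => show (-1:ℤ)^(m+1+k+1) * x' k = -((-1)^(m+k+1) * x' k) from by
        rw [show m+1+k+1 = (m+k+1)+1 from by omega, pow_succ]; ring)]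
      rw [Finset.sum_neg_distrib]
      have h2 : (-1:ℤ)^(m+1+(m+1)+1) = -1 := by
        rw [show m+1+(m+1)+1 = 2*(m+1)+1 from by omega, pow_succ, pow_mul]
        norm_num
      rw [h2]
      ring
    have e2 : (∑ k ∈ range (m+1+1), ((n+1).choose (n+1-k):ℤ))
        = (∑ k ∈ range (m+1), ((n+1).choose (n+1-k):ℤ)) + ((n+1).choose (n-m) : ℤ) := by
      rw [sum_range_succ, show n+1-(m+1) = n-m from by omega]
    have p1 : (-1:ℤ)^(n+1+(m+1)) = (-1)^(n+1+m) * (-1) := by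
      rw [show n+1+(m+1) = (n+1+m)+1 from by omega, pow_succ]
    have p2 : (-1:ℤ)^(n+1+m) * (-1)^(n+1) = (-1)^m := by
      rw [← pow_add, show (n+1+m)+(n+1) = 2*(n+1)+m from by omega, pow_add, pow_mul]
      norm_num
    rw [hA]
    simp only []
    rw [e1, e2, p1]
    linear_combination (-((n+1).choose (n-m) : ℤ) * d) * p2
  refine ⟨fun i => A (i:ℕ), ?_⟩
  rw [Matrix.toLin'_apply]
  funext i
  show φ.mulVec (fun j => A (j:ℕ)) i = x i
  simp only [Matrix.mulVec, dotProduct]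
  have hconv : (∑ j : Fin (n+1), φ i j * A (j:ℕ))
      = ∑ jj ∈ range (n+1),
        (if jj = n then
          (if (i:ℕ) = n then -((n:ℤ)+2)
           else (-1)^(n+1-(i:ℕ)) * ((n+1).choose (n+1-(i:ℕ)) : ℤ))
         else if (i:ℕ) = jj ∨ (i:ℕ) = jj + 1 then (-1:ℤ) else 0) * A jj := by
    rw [← Fin.sum_univ_eq_sum_range]
    exact sum_congr rfl (fun j _ => by rw [hφ])
  rw [hconv, row_split n (i:ℕ) (Nat.lt_succ_iff.1 i.isLt) _ A, ← hxi i]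
  by_cases him : (i:ℕ) = n
  · rw [him, if_pos rfl, if_neg (lt_irrefl n)]
    rcases n with _ | n'
    · rw [if_neg (by omega)]
      have hS0 : x' 0 = 2 * d := by
        have h := hS
        rw [sum_range_one] at h
        norm_num at h
        linarith [h]
      rw [hA0]
      push_cast
      linarith [hS0]
    · rw [if_pos (by omega), show n'+1-1 = n' from rfl]
      have hr := hrec n'
      rw [show n'+1-n' = 1 from by omega, Nat.choose_one_right] at hr
      have p3 : (-1:ℤ)^(n'+1+1) = (-1)^n' := by
        rw [show n'+1+1 = n'+2 from rfl, pow_add]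
        norm_num
      rw [hAn, p3] at hr ⊢
      push_cast at hr ⊢
      linear_combination (-1:ℤ) * hr
  · have hmn : (i:ℕ) < n := by omega
    rw [if_neg him, if_pos hmn]
    rcases hm0 : (i:ℕ) with _ | m'
    · rw [if_neg (by omega)]
      rw [show n+1-0 = n+1 from rfl, Nat.choose_self, hA0, hAn]
      push_cast
      linear_combination d * negpow_cancel (n+1)
    · rw [if_pos (by omega), show m'+1-1 = m' from rfl, hAn]
      have hr := hrec m'
      have p4 : (-1:ℤ)^(n+1-(m'+1)) * (-1)^(n+1) = -(-1:ℤ)^(m') := by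
        rw [npow_sub (show m'+1 ≤ n+1 by omega), ← pow_add,
          show (n+1+(m'+1))+(n+1) = 2*(n+1)+(m'+1) from by omega, pow_add, pow_mul]
        norm_num [pow_succ]
      rw [show n+1-(m'+1) = n-m' from by omega] at p4 ⊢
      linear_combination (-1:ℤ) * hr + (((n+1).choose (n-m') : ℤ) * d) * p4


theorem stmt6 (n : ℕ)
    (φ : Matrix (Fin (n + 1)) (Fin (n + 1)) ℤ)
    (hφ : ∀ i j, φ i j =
      if (j : ℕ) = n then
        (if (i : ℕ) = n then -((n : ℤ) + 2)
         else (-1) ^ (n + 1 - (i : ℕ)) * (Nat.choose (n + 1) (n + 1 - (i : ℕ)) : ℤ))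
      else if (i : ℕ) = (j : ℕ) ∨ (i : ℕ) = (j : ℕ) + 1 then -1 else 0) :
    Nonempty (((Fin (n + 1) → ℤ) ⧸ LinearMap.range (Matrix.toLin' φ)) ≃+
      ZMod (2 ^ (n + 1))) := by
  classical
  have hsurj : Function.Surjective (fmap n) := by
    intro z
    obtain ⟨c, rfl⟩ := ZMod.intCast_surjective z
    refine ⟨fun i => if i = 0 then c else 0, ?_⟩
    rw [fmap_apply]
    congr 1
    rw [Finset.sum_eq_single 0]
    · simp
    · intro b _ hb; simp [hb]
    · simp
  have hker : LinearMap.range (Matrix.toLin' φ) = LinearMap.ker (fmap n) :=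
    le_antisymm (dir1 n φ hφ) (dir2 n φ hφ)
  exact ⟨((Submodule.quotEquivOfEq _ _ hker).trans
    ((fmap n).quotKerEquivOfSurjective hsurj)).toAddEquiv⟩
end

section
/- Let n ≥ 1 and let N be the n×n integer matrix with ones on the subdiagonal and all last-column entries equal to -1 (and 0 elsewhere, as in the cluster category computation). If n is odd, then det(-N - I) = 0; equivalently, -1 is an eigenvalue of N, i.e., there is a nonzero integer vector v with N.mulVec v = -v. -/
theorem stmt12 (n : ℕ) (hn : 1 ≤ n) (hodd : Odd n)
    (N : Matrix (Fin n) (Fin n) ℤ)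
    (hN : ∀ i j, N i j =
      if (i : ℕ) = (j : ℕ) + 1 ∧ (j : ℕ) ≠ n - 1 then 1
      else if (j : ℕ) = n - 1 then -1 else 0) :
    (-N - 1).det = 0 ∧ ∃ v : Fin n → ℤ, v ≠ 0 ∧ N.mulVec v = -v := by
  obtain ⟨m, hm⟩ := hodd
  set v : Fin n → ℤ := fun i => if (i : ℕ) % 2 = 0 then 1 else 0 with hv
  have hvne : v ≠ 0 := by
    intro h
    have := congrFun h ⟨0, hn⟩
    simp [hv] at this
  have hmul : N.mulVec v = -v := by
    funext i
    simp only [Matrix.mulVec, dotProduct, Pi.neg_apply]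
    have hsplit : ∀ j : Fin n, N i j * v j =
        (if j = (⟨n - 1, by omega⟩ : Fin n) then -1 else 0) +
        (if (i : ℕ) = (j : ℕ) + 1 ∧ (j : ℕ) ≠ n - 1 then v j else 0) := by
      intro j
      rw [hN i j]
      by_cases h1 : (i : ℕ) = (j : ℕ) + 1 ∧ (j : ℕ) ≠ n - 1
      · have : j ≠ (⟨n - 1, by omega⟩ : Fin n) := by
          simp [Fin.ext_iff]; exact h1.2
        simp [h1, this]
      · by_cases h2 : (j : ℕ) = n - 1
        · have hj : j = (⟨n - 1, by omega⟩ : Fin n) := by simp [Fin.ext_iff, h2]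
          have hpar : ((j : ℕ)) % 2 = 0 := by omega
          simp [h1, h2, hj, hv, hpar]
          omega
        · have hj : j ≠ (⟨n - 1, by omega⟩ : Fin n) := by
            simp [Fin.ext_iff]; exact h2
          simp [h1, h2, hj]
    rw [Finset.sum_congr rfl fun j _ => hsplit j, Finset.sum_add_distrib]
    rw [Finset.sum_ite_eq' Finset.univ (⟨n - 1, by omega⟩ : Fin n) (fun _ => (-1 : ℤ))]
    simp only [Finset.mem_univ, if_true]
    by_cases hi : (i : ℕ) = 0
    · rw [Finset.sum_eq_zero]
      · simp [hv, hi]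
      · intro j _
        have : ¬((i : ℕ) = (j : ℕ) + 1 ∧ (j : ℕ) ≠ n - 1) := by omega
        simp [this]
    · obtain ⟨k, hk⟩ : ∃ k, (i : ℕ) = k + 1 := ⟨(i : ℕ) - 1, by omega⟩
      have hkn : k < n := by omega
      have hsum2 : ∀ j : Fin n,
          (if (i : ℕ) = (j : ℕ) + 1 ∧ (j : ℕ) ≠ n - 1 then v j else 0) =
          (if j = (⟨k, hkn⟩ : Fin n) then v j else 0) := by
        intro j
        have hiv : (i : ℕ) < n := i.isLt
        by_cases hj : j = (⟨k, hkn⟩ : Fin n)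
        · subst hj
          have : (i : ℕ) = k + 1 ∧ k ≠ n - 1 := by constructor <;> omega
          simp [this]
        · have hjk : (j : ℕ) ≠ k := by
            intro h; exact hj (Fin.ext h)
          have : ¬((i : ℕ) = (j : ℕ) + 1 ∧ (j : ℕ) ≠ n - 1) := by omega
          simp [this, hj]
      rw [Finset.sum_congr rfl fun j _ => hsum2 j,
        Finset.sum_ite_eq' Finset.univ (⟨k, hkn⟩ : Fin n) v]
      simp only [Finset.mem_univ, if_true, hv, hk]
      split_ifs <;> omega
  refine ⟨?_, v, hvne, hmul⟩
  rw [← Matrix.exists_mulVec_eq_zero_iff]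
  exact ⟨v, hvne, by
    rw [Matrix.sub_mulVec, Matrix.neg_mulVec, hmul, Matrix.one_mulVec]
    simp⟩
end

section
/- Let n ≥ 0 and m = 2^{n+1}. Consider the (n+1)×(n+1) exterior-algebra matrix φ (lower bidiagonal -1's in the first n columns, last column given by signed binomial coefficients (-1)^{n+1-i} C(n+1, n+1-i) for i < n and -(n+2) in position (n,n)). Then there exist matrices U, V in GL_{n+1}(ℤ) such that U * φ * V is the diagonal matrix diag(1, 1, ..., 1, m). -/
open Finset

/-- entry of the last column of φ for row `k < n`. -/
def stmtA (n k : ℕ) : ℤ := (-1) ^ (n + 1 - k) * (Nat.choose (n + 1) (n + 1 - k) : ℤ)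

/-- entry `V j n` for `j < n`. -/
def stmtB (n i : ℕ) : ℤ := ∑ k ∈ Finset.range (i + 1), (-1 : ℤ) ^ (i - k) * stmtA n k

lemma stmtB_zero (n : ℕ) : stmtB n 0 = stmtA n 0 := by
  simp [stmtB]

lemma stmtB_succ (n i : ℕ) : stmtB n (i + 1) = stmtA n (i + 1) - stmtB n i := by
  unfold stmtB
  rw [Finset.sum_range_succ, Nat.sub_self, pow_zero, one_mul]
  have h : ∀ k ∈ Finset.range (i + 1),
      (-1 : ℤ) ^ (i + 1 - k) * stmtA n k = -((-1 : ℤ) ^ (i - k) * stmtA n k) := by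
    intro k hk
    rw [Finset.mem_range] at hk
    rw [show i + 1 - k = (i - k) + 1 by omega, pow_succ]
    ring
  rw [Finset.sum_congr rfl h, Finset.sum_neg_distrib]
  ring

lemma stmt_nat_sum (n : ℕ) (hn : 1 ≤ n) :
    (∑ k ∈ Finset.range n, Nat.choose (n + 1) (n + 1 - k)) + n + 2 = 2 ^ (n + 1) := by
  have h1 : ∑ k ∈ Finset.range n, Nat.choose (n + 1) (n + 1 - k)
      = ∑ k ∈ Finset.range n, Nat.choose (n + 1) (k + 1 + 1) := by
    rw [← Finset.sum_range_reflect]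
    refine Finset.sum_congr rfl fun k hk => ?_
    rw [Finset.mem_range] at hk
    congr 1
    omega
  have h2 : ∑ k ∈ Finset.range (n + 2), Nat.choose (n + 1) k = 2 ^ (n + 1) :=
    Nat.sum_range_choose (n + 1)
  rw [Finset.sum_range_succ' _ (n + 1), Finset.sum_range_succ' _ n] at h2
  simp only [zero_add, Nat.choose_zero_right, Nat.choose_one_right] at h2
  omega

lemma stmtB_last (n : ℕ) (hn : 1 ≤ n) : stmtB n (n - 1) = 2 ^ (n + 1) - (n : ℤ) - 2 := by
  have h : stmtB n (n - 1)
      = ∑ k ∈ Finset.range n, (Nat.choose (n + 1) (n + 1 - k) : ℤ) := by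
    unfold stmtB
    rw [show n - 1 + 1 = n by omega]
    refine Finset.sum_congr rfl fun k hk => ?_
    rw [Finset.mem_range] at hk
    unfold stmtA
    rw [← mul_assoc, ← pow_add, show n - 1 - k + (n + 1 - k) = 2 * (n - k) by omega,
      pow_mul]
    norm_num
  have h2 := congrArg (Nat.cast : ℕ → ℤ) (stmt_nat_sum n hn)
  push_cast at h2
  rw [h]
  linarith

lemma stmt_key1 (n i : ℕ) (hi : i < n) :
    ∑ k ∈ Finset.range n, (if i = k ∨ i = k + 1 then (-1 : ℤ) else 0) * stmtB n k
      = -stmtA n i := by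
  rcases i with _ | j
  · have h : ∀ k ∈ Finset.range n, (if 0 = k ∨ 0 = k + 1 then (-1 : ℤ) else 0) * stmtB n k
        = if k = 0 then -stmtB n k else 0 := by
      intro k _
      rcases eq_or_ne k 0 with rfl | h
      · simp
      · simp [h, Ne.symm h]
    rw [Finset.sum_congr rfl h, Finset.sum_ite_eq' (Finset.range n) 0 (fun k => -stmtB n k),
      if_pos (Finset.mem_range.mpr hi), stmtB_zero]
  · have h : ∀ k ∈ Finset.range n,
        (if j + 1 = k ∨ j + 1 = k + 1 then (-1 : ℤ) else 0) * stmtB n k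
        = (if k = j + 1 then -stmtB n k else 0) + (if k = j then -stmtB n k else 0) := by
      intro k _
      rcases eq_or_ne k (j + 1) with rfl | h1
      · have : j ≠ j + 1 := by omega
        simp [this]
      · rcases eq_or_ne k j with rfl | h2
        · simp [h1, Ne.symm h1]
        · have h3 : ¬(j + 1 = k ∨ j + 1 = k + 1) := by omega
          rw [if_neg h3, if_neg h1, if_neg h2, zero_mul, add_zero]
    rw [Finset.sum_congr rfl h, Finset.sum_add_distrib,
      Finset.sum_ite_eq' (Finset.range n) (j + 1) (fun k => -stmtB n k),
      Finset.sum_ite_eq' (Finset.range n) j (fun k => -stmtB n k),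
      if_pos (Finset.mem_range.mpr hi), if_pos (Finset.mem_range.mpr (by omega)),
      stmtB_succ]
    ring

lemma stmt_key2 (n : ℕ) (hn : 1 ≤ n) :
    ∑ k ∈ Finset.range n, (if n = k ∨ n = k + 1 then (-1 : ℤ) else 0) * stmtB n k
      = -(2 ^ (n + 1) - (n : ℤ) - 2) := by
  have h : ∀ k ∈ Finset.range n, (if n = k ∨ n = k + 1 then (-1 : ℤ) else 0) * stmtB n k
      = if k = n - 1 then -stmtB n k else 0 := by
    intro k hk
    rw [Finset.mem_range] at hk
    rcases eq_or_ne k (n - 1) with rfl | h1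
    · rw [if_pos rfl, if_pos (by omega)]; ring
    · rw [if_neg (by omega), if_neg h1, zero_mul]
  rw [Finset.sum_congr rfl h, Finset.sum_ite_eq' (Finset.range n) (n - 1) (fun k => -stmtB n k),
    if_pos (Finset.mem_range.mpr (by omega)), stmtB_last n hn]

lemma stmt_key4 (i j : ℕ) :
    -(if j ≤ i then (-1 : ℤ) ^ (i - j + 1) else 0)
      - (if j + 1 ≤ i then (-1 : ℤ) ^ (i - (j + 1) + 1) else 0)
      = if i = j then 1 else 0 := by
  rcases lt_trichotomy i j with h | rfl | h
  · rw [if_neg (by omega), if_neg (by omega), if_neg (by omega)]; ring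
  · rw [if_pos le_rfl, if_neg (by omega), if_pos rfl, Nat.sub_self]; ring
  · rw [if_pos (by omega), if_pos (by omega), if_neg (by omega),
      show i - j + 1 = (i - (j + 1) + 1) + 1 by omega, pow_succ]
    ring

lemma stmt_fin_sum (m : ℕ) (f : ℕ → ℤ) : ∑ k : Fin m, f ↑k = ∑ k ∈ Finset.range m, f k :=
  Fin.sum_univ_eq_sum_range f m

theorem stmt15 (n : ℕ)
    (φ : Matrix (Fin (n + 1)) (Fin (n + 1)) ℤ)
    (hφ : ∀ i j, φ i j =
      if (j : ℕ) = n then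
        (if (i : ℕ) = n then -((n : ℤ) + 2)
         else (-1) ^ (n + 1 - (i : ℕ)) * (Nat.choose (n + 1) (n + 1 - (i : ℕ)) : ℤ))
      else if (i : ℕ) = (j : ℕ) ∨ (i : ℕ) = (j : ℕ) + 1 then -1 else 0) :
    ∃ U V : Matrix (Fin (n + 1)) (Fin (n + 1)) ℤ,
      IsUnit U.det ∧ IsUnit V.det ∧
      U * φ * V = Matrix.diagonal (fun i : Fin (n + 1) => if (i : ℕ) = n then (2 ^ (n + 1) : ℤ) else 1) := by
  classical
  set U : Matrix (Fin (n + 1)) (Fin (n + 1)) ℤ :=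
    Matrix.of (fun i k : Fin (n + 1) =>
      if (k : ℕ) ≤ (i : ℕ) then (-1 : ℤ) ^ ((i : ℕ) - (k : ℕ) + 1) else 0) with hU
  set V : Matrix (Fin (n + 1)) (Fin (n + 1)) ℤ :=
    Matrix.of (fun j l : Fin (n + 1) =>
      if (l : ℕ) = n then (if (j : ℕ) = n then 1 else stmtB n j)
      else if (j : ℕ) = (l : ℕ) then 1 else 0) with hV
  set N : Matrix (Fin (n + 1)) (Fin (n + 1)) ℤ :=
    Matrix.of (fun i j : Fin (n + 1) =>
      if (j : ℕ) = n then (if (i : ℕ) = n then -(2 ^ (n + 1) : ℤ) else 0)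
      else φ i j) with hNdef
  refine ⟨U, V, ?_, ?_, ?_⟩
  · -- U is lower triangular with -1 entries on the diagonal
    have htri : U.BlockTriangular OrderDual.toDual := by
      intro i j hij
      have h1 : i < j := hij
      have h2 : ¬((j : ℕ) ≤ (i : ℕ)) := by
        have := Fin.lt_iff_val_lt_val.mp h1; omega
      rw [hU]
      simp only [Matrix.of_apply]
      exact if_neg h2
    rw [Matrix.det_of_lowerTriangular U htri]
    have hdiag : ∀ i : Fin (n + 1), U i i = -1 := by
      intro i
      rw [hU]
      simp only [Matrix.of_apply]
      rw [if_pos le_rfl, Nat.sub_self, pow_one]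
    rw [Finset.prod_congr rfl (fun i _ => hdiag i), Finset.prod_const]
    exact (isUnit_one.neg).pow _
  · -- V is upper triangular with 1 entries on the diagonal
    have htri : V.BlockTriangular id := by
      intro i j hij
      have h1 : (j : ℕ) < (i : ℕ) := Fin.lt_iff_val_lt_val.mp hij
      have h2 : ¬((j : ℕ) = n) := by have := i.isLt; omega
      have h3 : ¬((i : ℕ) = (j : ℕ)) := by omega
      rw [hV]
      simp only [Matrix.of_apply]
      rw [if_neg h2, if_neg h3]
    rw [Matrix.det_of_upperTriangular htri]
    have hdiag : ∀ i : Fin (n + 1), V i i = 1 := by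
      intro i
      rw [hV]
      simp only [Matrix.of_apply]
      by_cases h : (i : ℕ) = n
      · rw [if_pos h, if_pos h]
      · rw [if_neg h]
        simp
    rw [Finset.prod_congr rfl (fun i _ => hdiag i), Finset.prod_const, one_pow]
    exact isUnit_one
  · -- the product
    have hφV : φ * V = N := by
      ext i j
      rw [Matrix.mul_apply]
      by_cases hj : (j : ℕ) = n
      · -- last column
        have hsummand : ∀ k : Fin (n + 1), φ i k * V k j =
            (fun k : ℕ => (if k = n then
                (if (i : ℕ) = n then -((n : ℤ) + 2)
                 else (-1) ^ (n + 1 - (i : ℕ)) * (Nat.choose (n + 1) (n + 1 - (i : ℕ)) : ℤ))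
              else (if (i : ℕ) = k ∨ (i : ℕ) = k + 1 then (-1 : ℤ) else 0))
              * (if k = n then 1 else stmtB n k)) ↑k := by
          intro k
          rw [hV]
          simp only [Matrix.of_apply]
          rw [if_pos hj, hφ i k]
        have hsum : (∑ k : Fin (n + 1), φ i k * V k j)
            = ∑ k ∈ Finset.range (n + 1),
              (if k = n then
                (if (i : ℕ) = n then -((n : ℤ) + 2)
                 else (-1) ^ (n + 1 - (i : ℕ)) * (Nat.choose (n + 1) (n + 1 - (i : ℕ)) : ℤ))
              else (if (i : ℕ) = k ∨ (i : ℕ) = k + 1 then (-1 : ℤ) else 0))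
              * (if k = n then 1 else stmtB n k) := by
          rw [Finset.sum_congr rfl (fun k _ => hsummand k)]
          exact stmt_fin_sum (n + 1) (fun k => (if k = n then
                (if (i : ℕ) = n then -((n : ℤ) + 2)
                 else (-1) ^ (n + 1 - (i : ℕ)) * (Nat.choose (n + 1) (n + 1 - (i : ℕ)) : ℤ))
              else (if (i : ℕ) = k ∨ (i : ℕ) = k + 1 then (-1 : ℤ) else 0))
              * (if k = n then 1 else stmtB n k))
        rw [hsum, Finset.sum_range_succ, if_pos rfl, if_pos rfl, mul_one]
        have hrest : ∀ k ∈ Finset.range n,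
            (if k = n then
                (if (i : ℕ) = n then -((n : ℤ) + 2)
                 else (-1) ^ (n + 1 - (i : ℕ)) * (Nat.choose (n + 1) (n + 1 - (i : ℕ)) : ℤ))
              else (if (i : ℕ) = k ∨ (i : ℕ) = k + 1 then (-1 : ℤ) else 0))
              * (if k = n then 1 else stmtB n k)
            = (if (i : ℕ) = k ∨ (i : ℕ) = k + 1 then (-1 : ℤ) else 0) * stmtB n k := by
          intro k hk
          rw [Finset.mem_range] at hk
          simp only [if_neg (show ¬(k = n) by omega)]
        rw [Finset.sum_congr rfl hrest, hNdef]
        simp only [Matrix.of_apply]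
        rw [if_pos hj]
        by_cases hi : (i : ℕ) = n
        · -- row n of the last column
          rw [if_pos hi, if_pos hi]
          rcases Nat.eq_zero_or_pos n with hn0 | hn1
          · subst hn0
            simp
          · rw [hi, stmt_key2 n hn1]
            push_cast
            ring
        · -- row i < n of the last column
          have hi' : (i : ℕ) < n := by have := i.isLt; omega
          rw [if_neg hi, if_neg hi, stmt_key1 n i hi']
          unfold stmtA
          ring
      · -- column j < n : V acts as identity there
        have hsummand : ∀ k : Fin (n + 1), φ i k * V k j =
            if k = j then φ i k else 0 := by
          intro k
          rw [hV]
          simp only [Matrix.of_apply]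
          rw [if_neg hj]
          by_cases h : k = j
          · rw [if_pos h, if_pos (congrArg Fin.val h), mul_one]
          · have h' : ¬((k : ℕ) = (j : ℕ)) := fun hh => h (Fin.ext hh)
            rw [if_neg h, if_neg h', mul_zero]
        rw [Finset.sum_congr rfl (fun k _ => hsummand k),
          Finset.sum_ite_eq' Finset.univ j (fun k => φ i k),
          if_pos (Finset.mem_univ j), hNdef]
        simp only [Matrix.of_apply]
        rw [if_neg hj]
    have hUN : U * N = Matrix.diagonal
        (fun i : Fin (n + 1) => if (i : ℕ) = n then (2 ^ (n + 1) : ℤ) else 1) := by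
      ext i j
      rw [Matrix.mul_apply, Matrix.diagonal_apply]
      by_cases hj : (j : ℕ) = n
      · -- last column of N is supported at row n
        have hsummand : ∀ k : Fin (n + 1), U i k * N k j =
            if k = Fin.last n then
              (if n ≤ (i : ℕ) then (-1 : ℤ) ^ ((i : ℕ) - n + 1) else 0) * (-(2 ^ (n + 1) : ℤ))
            else 0 := by
          intro k
          rw [hU, hNdef]
          simp only [Matrix.of_apply]
          rw [if_pos hj]
          by_cases h : k = Fin.last n
          · subst h
            rw [if_pos rfl]
            simp [Fin.val_last]
          · have hk : ¬((k : ℕ) = n) := fun hh => h (Fin.ext hh)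
            rw [if_neg h, if_neg hk, mul_zero]
        rw [Finset.sum_congr rfl (fun k _ => hsummand k),
          Finset.sum_ite_eq' Finset.univ (Fin.last n)
            (fun _ => (if n ≤ (i : ℕ) then (-1 : ℤ) ^ ((i : ℕ) - n + 1) else 0)
              * (-(2 ^ (n + 1) : ℤ))),
          if_pos (Finset.mem_univ _)]
        by_cases hi : (i : ℕ) = n
        · have hij : i = j := by rw [Fin.ext_iff, hi, hj]
          rw [if_pos hij, if_pos hi, if_pos (le_of_eq hi.symm), hi, Nat.sub_self]
          ring
        · have hij : i ≠ j := fun hh => hi (by rw [hh]; exact hj)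
          have h2 : ¬(n ≤ (i : ℕ)) := by have := i.isLt; omega
          rw [if_neg hij, if_neg h2, zero_mul]
      · -- column j < n of N agrees with φ
        have hsummand : ∀ k : Fin (n + 1), U i k * N k j =
            (fun k : ℕ =>
              (if k = (j : ℕ) ∨ k = (j : ℕ) + 1 then (-1 : ℤ) else 0)
              * (if k ≤ (i : ℕ) then (-1 : ℤ) ^ ((i : ℕ) - k + 1) else 0)) ↑k := by
          intro k
          rw [hU, hNdef]
          simp only [Matrix.of_apply]
          rw [if_neg hj, hφ k j, if_neg hj]
          show (if (k : ℕ) ≤ (i : ℕ) then (-1 : ℤ) ^ ((i : ℕ) - (k : ℕ) + 1) else 0)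
              * (if (k : ℕ) = (j : ℕ) ∨ (k : ℕ) = (j : ℕ) + 1 then (-1 : ℤ) else 0)
            = (if (k : ℕ) = (j : ℕ) ∨ (k : ℕ) = (j : ℕ) + 1 then (-1 : ℤ) else 0)
              * (if (k : ℕ) ≤ (i : ℕ) then (-1 : ℤ) ^ ((i : ℕ) - (k : ℕ) + 1) else 0)
          exact mul_comm _ _
        have hsum : (∑ k : Fin (n + 1), U i k * N k j)
            = ∑ k ∈ Finset.range (n + 1),
              (if k = (j : ℕ) ∨ k = (j : ℕ) + 1 then (-1 : ℤ) else 0)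
              * (if k ≤ (i : ℕ) then (-1 : ℤ) ^ ((i : ℕ) - k + 1) else 0) := by
          rw [Finset.sum_congr rfl (fun k _ => hsummand k)]
          exact stmt_fin_sum (n + 1) (fun k =>
            (if k = (j : ℕ) ∨ k = (j : ℕ) + 1 then (-1 : ℤ) else 0)
            * (if k ≤ (i : ℕ) then (-1 : ℤ) ^ ((i : ℕ) - k + 1) else 0))
        rw [hsum]
        have hsplit : ∀ k ∈ Finset.range (n + 1),
            (if k = (j : ℕ) ∨ k = (j : ℕ) + 1 then (-1 : ℤ) else 0)
              * (if k ≤ (i : ℕ) then (-1 : ℤ) ^ ((i : ℕ) - k + 1) else 0)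
            = (if k = (j : ℕ) then
                -(if (j : ℕ) ≤ (i : ℕ) then (-1 : ℤ) ^ ((i : ℕ) - (j : ℕ) + 1) else 0) else 0)
              + (if k = (j : ℕ) + 1 then
                -(if (j : ℕ) + 1 ≤ (i : ℕ) then (-1 : ℤ) ^ ((i : ℕ) - ((j : ℕ) + 1) + 1) else 0)
                else 0) := by
          intro k _
          rcases eq_or_ne k (j : ℕ) with rfl | h1
          · rw [if_pos (Or.inl rfl), if_pos rfl,
              if_neg (show ¬((j : ℕ) = (j : ℕ) + 1) by omega), add_zero]
            ring
          · rcases eq_or_ne k ((j : ℕ) + 1) with rfl | h2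
            · rw [if_pos (Or.inr rfl), if_neg h1, if_pos rfl, zero_add]
              ring
            · have h3 : ¬(k = (j : ℕ) ∨ k = (j : ℕ) + 1) := by omega
              rw [if_neg h3, if_neg h1, if_neg h2, zero_mul, add_zero]
        rw [Finset.sum_congr rfl hsplit, Finset.sum_add_distrib,
          Finset.sum_ite_eq' (Finset.range (n + 1)) ((j : ℕ)) _,
          Finset.sum_ite_eq' (Finset.range (n + 1)) ((j : ℕ) + 1) _,
          if_pos (Finset.mem_range.mpr (by omega)),
          if_pos (Finset.mem_range.mpr (by have := j.isLt; omega))]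
        have hkey := stmt_key4 (i : ℕ) (j : ℕ)
        by_cases hij : i = j
        · have hij' : (i : ℕ) = (j : ℕ) := congrArg Fin.val hij
          rw [if_pos hij, if_neg (show ¬((i : ℕ) = n) by rw [hij']; exact hj)]
          rw [if_pos hij'] at hkey
          linarith [hkey]
        · have hij' : (i : ℕ) ≠ (j : ℕ) := fun hh => hij (Fin.ext hh)
          rw [if_neg hij]
          rw [if_neg hij'] at hkey
          linarith [hkey]
    rw [mul_assoc, hφV, hUN]
end
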